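/- Let α be a ∀-clause of rank 1. If GND(α, 1) is satisfiable (some model satisfies every ground clause in it), then GND(α, z) is satisfiable for every z ≥ 1. -/

import Mathlib

namespace ImplicitFOL

attribute [local instance] Classical.propDecidable

/-- Ground atoms: a predicate symbol applied to a tuple of names (natural numbers). -/
def GAtom {Pred : Type} (ar : Pred → ℕ) : Type :=
  Σ P : Pred, Fin (ar P) → ℕ

/-- A model assigns a Boolean value to every ground atom. -/
abbrev Model {Pred : Type} (ar : Pred → ℕ) : Type := GAtom ar → Bool

/-- A partial model maps every ground atom to {0,1,*}; `none` plays the role of `*`. -/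
abbrev PartialModel {Pred : Type} (ar : Pred → ℕ) : Type := GAtom ar → Option Bool

/-- A literal: an atom or its negation (`true` = positive). -/
abbrev Lit {Pred : Type} (ar : Pred → ℕ) : Type := Bool × GAtom ar

/-- A ground clause: a finite disjunction of literals. -/
abbrev Clause {Pred : Type} (ar : Pred → ℕ) : Type := Finset (Lit ar)

/-- Terms occurring in non-ground atoms: variables or names. -/
inductive Term : Type
  | var : ℕ → Term
  | name : ℕ → Term
  deriving DecidableEq

/-- Formulas built from acceptable equalities `x = a` using ¬, ∨, ∧. -/
inductive EqForm : Type
  | eq : ℕ → ℕ → EqForm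
  | not : EqForm → EqForm
  | or : EqForm → EqForm → EqForm
  | and : EqForm → EqForm → EqForm
  deriving DecidableEq

/-- Non-ground atoms: a predicate applied to a tuple of terms. -/
def NGAtom {Pred : Type} (ar : Pred → ℕ) : Type :=
  Σ P : Pred, Fin (ar P) → Term

/-- A ∀-clause ∀(e ⊃ c): `e` built from acceptable equalities, `c` a disjunction of atoms. -/
structure VClause {Pred : Type} (ar : Pred → ℕ) : Type where
  e : EqForm
  c : List (NGAtom ar)

/-- Ground formulas over atoms of type `A` (with truth constants). -/
inductive Form (A : Type) : Type
  | tru : Form A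
  | fls : Form A
  | atom : A → Form A
  | not : Form A → Form A
  | or : Form A → Form A → Form A
  | and : Form A → Form A → Form A
  | imp : Form A → Form A → Form A

namespace Form

variable {A : Type}

/-- Evaluation of a ground formula in a model. -/
def eval (M : A → Bool) : Form A → Bool
  | tru => true
  | fls => false
  | atom a => M a
  | not φ => !(eval M φ)
  | or φ ψ => eval M φ || eval M ψ
  | and φ ψ => eval M φ && eval M ψ
  | imp φ ψ => !(eval M φ) || eval M ψ

/-- Witnessed evaluation in a partial model: `some true`/`some false` mean
witnessed true/false, `none` means neither. -/
def wit (N : A → Option Bool) : Form A → Option Bool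
  | tru => some true
  | fls => some false
  | atom a => N a
  | not φ => (wit N φ).map fun b => !b
  | or φ ψ =>
    match wit N φ, wit N ψ with
    | some true, _ => some true
    | _, some true => some true
    | some false, some false => some false
    | _, _ => none
  | and φ ψ =>
    match wit N φ, wit N ψ with
    | some false, _ => some false
    | _, some false => some false
    | some true, some true => some true
    | _, _ => none
  | imp φ ψ =>
    match wit N φ, wit N ψ with
    | some false, _ => some true
    | _, some true => some true
    | some true, some false => some false
    | _, _ => none

/-- Restriction of a ground formula under a partial model. -/
def restrict (N : A → Option Bool) : Form A → Form A
  | tru => tru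
  | fls => fls
  | atom a =>
    match N a with
    | some true => tru
    | some false => fls
    | none => atom a
  | not φ => not (restrict N φ)
  | or φ ψ => or (restrict N φ) (restrict N ψ)
  | and φ ψ => and (restrict N φ) (restrict N ψ)
  | imp φ ψ => imp (restrict N φ) (restrict N ψ)

end Form

variable {Pred : Type} {ar : Pred → ℕ}

/-- A partial model `N` is consistent with a model `M`. -/
def Consistent (N : PartialModel ar) (M : Model ar) : Prop :=
  ∀ (p : GAtom ar) (b : Bool), N p = some b → M p = b

/-- A literal is true in a model. -/
def litTrue (M : Model ar) (l : Lit ar) : Prop := M l.2 = l.1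

/-- A model satisfies a clause iff some literal of it is true. -/
def clauseTrue (M : Model ar) (c : Clause ar) : Prop := ∃ l ∈ c, litTrue M l

/-- Negation of a literal. -/
def negLit (l : Lit ar) : Lit ar := (!l.1, l.2)

/-- Names mentioned in a ground atom. -/
def GAtom.names (a : GAtom ar) : Finset ℕ := Finset.image a.2 Finset.univ

/-- Names mentioned in a ground formula. -/
def Form.namesOf : Form (GAtom ar) → Finset ℕ
  | .tru => ∅
  | .fls => ∅
  | .atom a => GAtom.names a
  | .not φ => Form.namesOf φ
  | .or φ ψ => Form.namesOf φ ∪ Form.namesOf ψ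
  | .and φ ψ => Form.namesOf φ ∪ Form.namesOf ψ
  | .imp φ ψ => Form.namesOf φ ∪ Form.namesOf ψ

/-- Names mentioned in a ground clause. -/
def Clause.namesOf (c : Clause ar) : Finset ℕ := c.sup fun l => GAtom.names l.2

def Term.subst (θ : ℕ → ℕ) : Term → ℕ
  | .var v => θ v
  | .name n => n

def Term.namesOf : Term → Finset ℕ
  | .var _ => ∅
  | .name n => {n}

def Term.varsOf : Term → Finset ℕ
  | .var v => {v}
  | .name _ => ∅

/-- Evaluation of an equality formula under a substitution of names for variables. -/
def EqForm.eval (θ : ℕ → ℕ) : EqForm → Bool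
  | .eq v n => θ v == n
  | .not e => !(EqForm.eval θ e)
  | .or e₁ e₂ => EqForm.eval θ e₁ || EqForm.eval θ e₂
  | .and e₁ e₂ => EqForm.eval θ e₁ && EqForm.eval θ e₂

def EqForm.namesOf : EqForm → Finset ℕ
  | .eq _ n => {n}
  | .not e => EqForm.namesOf e
  | .or e₁ e₂ => EqForm.namesOf e₁ ∪ EqForm.namesOf e₂
  | .and e₁ e₂ => EqForm.namesOf e₁ ∪ EqForm.namesOf e₂

def EqForm.varsOf : EqForm → Finset ℕ
  | .eq v _ => {v}
  | .not e => EqForm.varsOf e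
  | .or e₁ e₂ => EqForm.varsOf e₁ ∪ EqForm.varsOf e₂
  | .and e₁ e₂ => EqForm.varsOf e₁ ∪ EqForm.varsOf e₂

def NGAtom.subst (θ : ℕ → ℕ) (a : NGAtom ar) : GAtom ar :=
  ⟨a.1, fun i => Term.subst θ (a.2 i)⟩

def NGAtom.namesOf (a : NGAtom ar) : Finset ℕ :=
  Finset.univ.biUnion fun i => Term.namesOf (a.2 i)

def NGAtom.varsOf (a : NGAtom ar) : Finset ℕ :=
  Finset.univ.biUnion fun i => Term.varsOf (a.2 i)

/-- Variables mentioned in a ∀-clause. -/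
def VClause.varsOf (vc : VClause ar) : Finset ℕ :=
  EqForm.varsOf vc.e ∪ vc.c.foldr (fun a s => NGAtom.varsOf a ∪ s) ∅

/-- Names mentioned in a ∀-clause. -/
def VClause.namesOf (vc : VClause ar) : Finset ℕ :=
  EqForm.namesOf vc.e ∪ vc.c.foldr (fun a s => NGAtom.namesOf a ∪ s) ∅

/-- The ground clause cθ obtained by applying the substitution θ to the clause part. -/
noncomputable def VClause.ground (vc : VClause ar) (θ : ℕ → ℕ) : Clause ar :=
  (vc.c.map fun a => ((true : Bool), NGAtom.subst θ a)).toFinset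

/-- Substitutional satisfaction of a ∀-clause: every instance whose equality
condition holds is a true clause. -/
def VClause.sat (M : Model ar) (vc : VClause ar) : Prop :=
  ∀ θ : ℕ → ℕ, EqForm.eval θ vc.e = true → clauseTrue M (VClause.ground vc θ)

/-- Names mentioned in a KB. -/
def kbNames (Δ : Finset (VClause ar)) : Finset ℕ := Δ.sup VClause.namesOf

/-- Rank of a KB: maximum number of variables mentioned in any ∀-clause of it. -/
def rank (Δ : Finset (VClause ar)) : ℕ := Δ.sup fun vc => (VClause.varsOf vc).card

/-- GND(Δ): grounding over all names. -/
def gnd (Δ : Finset (VClause ar)) : Set (Clause ar) :=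
  { g | ∃ vc ∈ Δ, ∃ θ : ℕ → ℕ, EqForm.eval θ vc.e = true ∧ g = VClause.ground vc θ }

/-- GND(Δ, C): grounding over the names mentioned in Δ together with those in C. -/
def gndOver (Δ : Finset (VClause ar)) (C : Finset ℕ) : Set (Clause ar) :=
  { g | ∃ vc ∈ Δ, ∃ θ : ℕ → ℕ, (∀ v, θ v ∈ kbNames Δ ∪ C) ∧
          EqForm.eval θ vc.e = true ∧ g = VClause.ground vc θ }

/-- A literal is made true by a partial model. -/
def litTrueN (N : PartialModel ar) (l : Lit ar) : Prop := N l.2 = some l.1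

/-- A literal is made false by a partial model. -/
def litFalseN (N : PartialModel ar) (l : Lit ar) : Prop := N l.2 = some (!l.1)

/-- A ∀-clause is witnessed true in `N` for the set of names `C`: every grounding
over `C` whose equality condition holds yields a clause with a literal true under `N`. -/
def VClause.witnessed (N : PartialModel ar) (C : Finset ℕ) (vc : VClause ar) : Prop :=
  ∀ θ : ℕ → ℕ, (∀ v, θ v ∈ C) → EqForm.eval θ vc.e = true →
    ∃ l ∈ VClause.ground vc θ, litTrueN N l

/-- U(s): the least superset of `s` closed under unit propagation. -/
inductive UP (s : Set (Clause ar)) : Clause ar → Prop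
  | base {c : Clause ar} : c ∈ s → UP s c
  | unit {l : Lit ar} {c : Clause ar} :
      UP s {l} → UP s (insert (negLit l) c) → UP s c

/-- V(s): all weakenings of clauses of U(s). -/
def Vset (s : Set (Clause ar)) : Set (Clause ar) := { c | ∃ c', UP s c' ∧ c' ⊆ c }

/-- Limited entailment `s ⊨_z φ`. -/
def entailsAt : ℕ → Set (Clause ar) → Clause ar → Prop
  | 0, s, φ => φ ∈ Vset s
  | z + 1, s, φ => ∃ c ∈ s, ∀ l ∈ c, entailsAt z (insert ({l} : Clause ar) s) φ

/-- Restriction of a ground clause under a partial model: `none` is the constant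
true (some literal is made true by `N`); otherwise false literals are deleted. -/
noncomputable def restrictClause (N : PartialModel ar) (c : Clause ar) : Option (Clause ar) :=
  if ∃ l ∈ c, litTrueN N l then none else some (c.filter fun l => ¬ litFalseN N l)

/-- Restriction of a set of ground clauses (constant-true clauses are dropped). -/
def restrictSet (N : PartialModel ar) (F : Set (Clause ar)) : Set (Clause ar) :=
  { c' | ∃ c ∈ F, restrictClause N c = some c' }

/-- Satisfaction of a possibly-trivially-true restricted clause. -/
def optClauseTrue (M : Model ar) : Option (Clause ar) → Prop
  | none => True
  | some c => clauseTrue M c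

/-- Limited entailment where the constant true is deemed entailed at every level. -/
def entailsAtOpt (z : ℕ) (s : Set (Clause ar)) : Option (Clause ar) → Prop
  | none => True
  | some φ => entailsAt z s φ


/-!
Collapse the new names onto `b₀`. The equality conditions and the atoms of the clause only mention
names of the clause, and neither `b₀` nor the new names are among them, so every grounding over the
new names turns, under the collapse, into a grounding over `b₀` with the same equality condition;
hence a model of GND(α, 1), read through the collapse, satisfies GND(α, z).
-/

def GAtom.rename (r : ℕ → ℕ) (p : GAtom ar) : GAtom ar := ⟨p.1, r ∘ p.2⟩

theorem EqForm.eval_comp {r : ℕ → ℕ} {e : EqForm}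
    (hr : ∀ m, ∀ a ∈ e.namesOf, r m = a ↔ m = a) (θ : ℕ → ℕ) :
    e.eval (r ∘ θ) = e.eval θ := by
  induction e with
  | eq v n => simp [EqForm.eval, hr (θ v) n (by simp [EqForm.namesOf])]
  | not e ih => simp only [EqForm.eval, ih hr]
  | or e₁ e₂ ih₁ ih₂ | and e₁ e₂ ih₁ ih₂ =>
    simp only [EqForm.eval, ih₁ fun m a ha => hr m a (Finset.mem_union_left _ ha),
      ih₂ fun m a ha => hr m a (Finset.mem_union_right _ ha)]

theorem Term.subst_comp {r : ℕ → ℕ} {t : Term} (hr : ∀ n ∈ t.namesOf, r n = n) (θ : ℕ → ℕ) :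
    t.subst (r ∘ θ) = r (t.subst θ) := by
  cases t with
  | var v => rfl
  | name n => exact (hr n (Finset.mem_singleton_self n)).symm

theorem NGAtom.subst_comp {r : ℕ → ℕ} {a : NGAtom ar} (hr : ∀ n ∈ a.namesOf, r n = n)
    (θ : ℕ → ℕ) : a.subst (r ∘ θ) = (a.subst θ).rename r := by
  refine Sigma.ext rfl (heq_of_eq (funext fun i => Term.subst_comp (fun n hn => hr n ?_) θ))
  exact Finset.mem_biUnion.2 ⟨i, Finset.mem_univ i, hn⟩

theorem NGAtom.namesOf_subset_of_mem {vc : VClause ar} {a : NGAtom ar} (ha : a ∈ vc.c) :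
    a.namesOf ⊆ vc.namesOf := by
  unfold VClause.namesOf
  refine subset_trans ?_ Finset.subset_union_right
  generalize vc.c = l at ha ⊢
  induction l with
  | nil => simp at ha
  | cons b t ih =>
    rcases List.mem_cons.1 ha with rfl | ha
    · exact Finset.subset_union_left
    · exact subset_trans (ih ha) Finset.subset_union_right

theorem clauseTrue_ground_comp {r : ℕ → ℕ} {vc : VClause ar} (hr : ∀ n ∈ vc.namesOf, r n = n)
    (M : Model ar) (θ : ℕ → ℕ) :
    clauseTrue M (vc.ground (r ∘ θ)) ↔ clauseTrue (M ∘ GAtom.rename r) (vc.ground θ) := by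
  simp only [clauseTrue, VClause.ground, List.mem_toFinset, List.mem_map, litTrue,
    exists_exists_and_eq_and, Function.comp_apply]
  refine exists_congr fun a => and_congr_right fun ha => ?_
  rw [NGAtom.subst_comp fun n hn => hr n (NGAtom.namesOf_subset_of_mem ha hn)]

theorem clauseTrue_rename_of_gndOver {Δ : Finset (VClause ar)} {C E : Finset ℕ} {r : ℕ → ℕ}
    (hr : ∀ m, ∀ a ∈ kbNames Δ, r m = a ↔ m = a)
    (hmaps : ∀ n ∈ kbNames Δ ∪ E, r n ∈ kbNames Δ ∪ C) {M : Model ar}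
    (hM : ∀ g ∈ gndOver Δ C, clauseTrue M g) :
    ∀ g ∈ gndOver Δ E, clauseTrue (M ∘ GAtom.rename r) g := by
  rintro _ ⟨vc, hvc, θ, hθ, he, rfl⟩
  have hsub : vc.namesOf ⊆ kbNames Δ := Finset.le_sup (f := VClause.namesOf) hvc
  rw [← clauseTrue_ground_comp fun n hn => (hr n n (hsub hn)).2 rfl]
  refine hM _ ⟨vc, hvc, r ∘ θ, fun v => hmaps _ (hθ v), ?_, rfl⟩
  rwa [EqForm.eval_comp fun m a ha => hr m a (hsub (Finset.mem_union_left _ ha))]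

variable [Countable Pred]

theorem statement3_general
    (vc : VClause ar)
    (b₀ : ℕ) (hb₀ : b₀ ∉ VClause.namesOf vc)
    (hsat : ∃ M : Model ar, ∀ g ∈ gndOver {vc} ({b₀} : Finset ℕ), clauseTrue M g)
    (E : Finset ℕ)
    (hdisj : Disjoint E (VClause.namesOf vc)) :
    ∃ M : Model ar, ∀ g ∈ gndOver {vc} E, clauseTrue M g := by
  obtain ⟨M, hM⟩ := hsat
  have hkb : kbNames {vc} = vc.namesOf := Finset.sup_singleton
  let collapse : ℕ → ℕ := fun n => if n ∈ E then b₀ else n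
  refine ⟨M ∘ GAtom.rename collapse, clauseTrue_rename_of_gndOver ?_ ?_ hM⟩
  · intro m a ha
    rw [hkb] at ha
    by_cases hm : m ∈ E
    · simp only [collapse, if_pos hm]
      exact iff_of_false (fun h => hb₀ (h ▸ ha))
        (fun h => Finset.disjoint_left.1 hdisj hm (h ▸ ha))
    · simp only [collapse, if_neg hm]
  · intro n hn
    by_cases hnE : n ∈ E
    · simp [collapse, hnE]
    · simp only [collapse, if_neg hnE]
      exact Finset.mem_union_left _ ((Finset.mem_union.1 hn).resolve_right hnE)

/-- Lemma: extending groundings preserves satisfiability: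
for a ∀-clause of rank 1, if GND(α,1) is satisfiable then so is GND(α,z) for
every z ≥ 1. -/
theorem statement3
    (vc : VClause ar) (hrank : (VClause.varsOf vc).card = 1)
    (b₀ : ℕ) (hb₀ : b₀ ∉ VClause.namesOf vc)
    (hsat : ∃ M : Model ar, ∀ g ∈ gndOver {vc} ({b₀} : Finset ℕ), clauseTrue M g)
    (z : ℕ) (hz : 1 ≤ z) (E : Finset ℕ) (hE : E.card = z)
    (hdisj : Disjoint E (VClause.namesOf vc)) :
    ∃ M : Model ar, ∀ g ∈ gndOver {vc} E, clauseTrue M g :=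
  statement3_general vc b₀ hb₀ hsat E hdisj

end ImplicitFOL
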